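/- Fix i ≥ 1. Let the attention weight vector a_i ∈ ℝ^i have support size S_i = R_i + N_i, where R_i ≤ r deterministically and E[N_i] ≤ κ. Then the expected effective entropy satisfies E[H(a_i)] ≤ log(1 + r + κ), where H(a_i) is the Shannon entropy of the ℓ1-normalized absolute weights. -/

import Mathlib

/-!
Jensen for the concave `log` bounds the entropy of a probability vector by the log of its
support size, so pointwise `H(a ω) ≤ log (1 + R ω + N ω) ≤ log (1 + r + N ω)`. Jensen once more,
now for the expectation, moves `E` inside the `log`: `E[H(a)] ≤ log (1 + r + E[N]) ≤ log (1 + r + κ)`.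
-/

open MeasureTheory
open scoped Classical

/-- Effective entropy: Shannon entropy of the ℓ1-normalized absolute values of a vector
(taken to be 0 when the vector is 0). -/
noncomputable def effEntropy {n : ℕ} (a : Fin n → ℝ) : ℝ :=
  if (∑ j, |a j|) = 0 then 0
  else -∑ j, (|a j| / ∑ k, |a k|) * Real.log (|a j| / ∑ k, |a k|)

/-- Jensen for the concave `log`, applied to the weights `p j` at the points `(p j)⁻¹`. -/
theorem entropy_le_log_card_support {ι : Type*} [Fintype ι] (p : ι → ℝ) (hp : ∀ j, 0 ≤ p j)
    (hsum : ∑ j, p j = 1) :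
    -∑ j, p j * Real.log (p j) ≤ Real.log (Finset.univ.filter fun j => p j ≠ 0).card := by
  set s := Finset.univ.filter fun j => p j ≠ 0
  have hne : ∀ j ∈ s, p j ≠ 0 := fun j hj => (Finset.mem_filter.mp hj).2
  have hsum_s : ∑ j ∈ s, p j = 1 := by rw [Finset.sum_filter_ne_zero, hsum]
  have jensen := strictConcaveOn_log_Ioi.concaveOn.le_map_sum (t := s) (p := fun j => (p j)⁻¹)
    (fun j _ => hp j) hsum_s
    (fun j hj => inv_pos.mpr ((hp j).lt_of_ne (hne j hj).symm))
  simp only [smul_eq_mul] at jensen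
  have hmean : ∑ j ∈ s, p j * (p j)⁻¹ = s.card := by
    rw [Finset.sum_congr rfl fun j hj => mul_inv_cancel₀ (hne j hj), Finset.sum_const,
      nsmul_one]
  have hentropy : ∑ j ∈ s, p j * Real.log (p j)⁻¹ = -∑ j, p j * Real.log (p j) := by
    rw [Finset.sum_filter_of_ne fun j _ h => left_ne_zero_of_mul h, ← Finset.sum_neg_distrib]
    simp [Real.log_inv]
  rwa [hmean, hentropy] at jensen

theorem effEntropy_nonneg {n : ℕ} (a : Fin n → ℝ) : 0 ≤ effEntropy a := by
  unfold effEntropy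
  split_ifs with h
  · rfl
  have hT : 0 < ∑ k, |a k| := (Finset.sum_nonneg fun k _ => abs_nonneg _).lt_of_ne' h
  rw [neg_nonneg]
  refine Finset.sum_nonpos fun j _ => Real.mul_log_nonpos (by positivity) ?_
  rw [div_le_one hT]
  exact Finset.single_le_sum (fun k _ => abs_nonneg (a k)) (Finset.mem_univ j)

theorem effEntropy_le_log_one_add_card_support {n : ℕ} (a : Fin n → ℝ) :
    effEntropy a ≤ Real.log (1 + (Finset.univ.filter fun j => a j ≠ 0).card) := by
  set m := (Finset.univ.filter fun j => a j ≠ 0).card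
  have hlog_mono : Real.log m ≤ Real.log (1 + m) := by
    rcases Nat.eq_zero_or_pos m with hm | hm
    · simp [hm]
    · exact Real.log_le_log (by exact_mod_cast hm) (by linarith)
  unfold effEntropy
  split_ifs with h
  · exact Real.log_nonneg (by linarith [(Nat.cast_nonneg m : (0 : ℝ) ≤ m)])
  have hT : 0 < ∑ k, |a k| := (Finset.sum_nonneg fun k _ => abs_nonneg _).lt_of_ne' h
  have hsupp : (Finset.univ.filter fun j => |a j| / ∑ k, |a k| ≠ 0) =
      Finset.univ.filter fun j => a j ≠ 0 := by
    simp [hT.ne']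
  have := entropy_le_log_card_support (fun j => |a j| / ∑ k, |a k|)
    (fun j => by positivity) (by rw [← Finset.sum_div, div_self hT.ne'])
  rw [hsupp] at this
  exact this.trans hlog_mono

theorem Real.log_le_log_add_div_sub_one {x c : ℝ} (hx : 0 < x) (hc : 0 < c) :
    Real.log x ≤ Real.log c + (x / c - 1) := by
  have := Real.log_le_sub_one_of_pos (div_pos hx hc)
  rw [Real.log_div hx.ne' hc.ne'] at this
  linarith

/-- Jensen for `log` through its tangent line at `c`; `0 ≤ f` stands in for integrability of `f`. -/
theorem integral_le_log_of_le_log {Ω : Type*} [MeasurableSpace Ω] {μ : Measure Ω}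
    [IsProbabilityMeasure μ] {f X : Ω → ℝ} {c : ℝ} (hf : 0 ≤ f) (hX : Integrable X μ)
    (hX_pos : ∀ ω, 0 < X ω) (hfX : ∀ ω, f ω ≤ Real.log (X ω)) (hc : ∫ ω, X ω ∂μ ≤ c) :
    ∫ ω, f ω ∂μ ≤ Real.log c := by
  have hX_int_pos : 0 < ∫ ω, X ω ∂μ := by
    rw [integral_pos_iff_support_of_nonneg (fun ω => (hX_pos ω).le) hX,
      Function.support_eq_univ fun ω => (hX_pos ω).ne', measure_univ]
    exact one_pos
  have hc_pos : 0 < c := hX_int_pos.trans_le hc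
  have hlin : Integrable (fun ω => X ω / c - 1) μ := (hX.div_const c).sub (integrable_const _)
  calc ∫ ω, f ω ∂μ ≤ ∫ ω, Real.log c + (X ω / c - 1) ∂μ :=
        integral_mono_of_nonneg (.of_forall hf) ((integrable_const _).add hlin)
          (.of_forall fun ω => (hfX ω).trans (Real.log_le_log_add_div_sub_one (hX_pos ω) hc_pos))
    _ = Real.log c + ((∫ ω, X ω ∂μ) / c - 1) := by
        rw [integral_add (integrable_const _) hlin,
          integral_sub (hX.div_const c) (integrable_const _), integral_div]
        simp
    _ ≤ Real.log c := by
        have : (∫ ω, X ω ∂μ) / c ≤ 1 := (div_le_one hc_pos).mpr hc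
        linarith

theorem tra_expected_entropy_bound_general {Ω : Type*} [MeasurableSpace Ω]
    (μ : Measure Ω) [IsProbabilityMeasure μ]
    (i : ℕ) (a : Ω → Fin i → ℝ) (R N : Ω → ℕ) (r κ : ℝ)
    (hintN : Integrable (fun ω => (N ω : ℝ)) μ)
    (hsplit : ∀ ω, (Finset.univ.filter fun j => a ω j ≠ 0).card = R ω + N ω)
    (hR : ∀ ω, (R ω : ℝ) ≤ r)
    (hN : ∫ ω, (N ω : ℝ) ∂μ ≤ κ) :
    ∫ ω, effEntropy (a ω) ∂μ ≤ Real.log (1 + r + κ) := by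
  have hsupport_le : ∀ ω, 1 + ((R ω + N ω : ℕ) : ℝ) ≤ 1 + r + N ω := fun ω => by
    push_cast
    linarith [hR ω]
  have hX : Integrable (fun ω => 1 + r + (N ω : ℝ)) μ := (integrable_const (1 + r)).add hintN
  refine integral_le_log_of_le_log (fun ω => effEntropy_nonneg (a ω)) hX
    (fun ω => by linarith [hsupport_le ω, (R ω + N ω).cast_nonneg (α := ℝ)]) (fun ω => ?_) ?_
  · calc effEntropy (a ω) ≤ Real.log (1 + ((R ω + N ω : ℕ) : ℝ)) := by
          simpa [hsplit ω] using effEntropy_le_log_one_add_card_support (a ω)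
      _ ≤ Real.log (1 + r + N ω) := Real.log_le_log (by positivity) (hsupport_le ω)
  · rw [integral_add (integrable_const _) hintN, integral_const]
    simp only [probReal_univ, one_smul]
    linarith

/-- **Key estimate of Theorem 4.4 (TRA is non-dispersive).** If the support size of the
attention vector splits as S_i = R_i + N_i with R_i ≤ r deterministically and E[N_i] ≤ κ,
then E[H(a_i)] ≤ log(1 + r + κ). -/
theorem tra_expected_entropy_bound {Ω : Type*} [MeasurableSpace Ω]
    (μ : Measure Ω) [IsProbabilityMeasure μ]
    (i : ℕ) (hi : 1 ≤ i) (a : Ω → Fin i → ℝ) (R N : Ω → ℕ) (r κ : ℝ)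
    (hmeasa : Measurable a) (hmeasN : Measurable N)
    (hintN : Integrable (fun ω => (N ω : ℝ)) μ)
    (hsplit : ∀ ω, (Finset.univ.filter fun j => a ω j ≠ 0).card = R ω + N ω)
    (hR : ∀ ω, (R ω : ℝ) ≤ r)
    (hN : ∫ ω, (N ω : ℝ) ∂μ ≤ κ) :
    ∫ ω, effEntropy (a ω) ∂μ ≤ Real.log (1 + r + κ) :=
  tra_expected_entropy_bound_general μ i a R N r κ hintN hsplit hR hN
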